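/- In the group of ℤ-linear isometries of the lattice (M_n, χ_n) (ℤ-module automorphisms φ of M_n with χ_n(φf, φg) = χ_n(f, g) for all f, g ∈ M_n), the subgroup of unipotent isometries (those φ with (φ − id)^{n+1} = 0) is a subgroup of index 2. -/

import Mathlib

open Polynomial

/-- `V n`: the real vector space of polynomials in `ℝ[t]` of degree at most `n`. -/
noncomputable def V (n : ℕ) : Submodule ℝ ℝ[X] := Polynomial.degreeLT ℝ (n + 1)

/-- Differentiation `D : V_n → V_n`. -/
noncomputable def Dop (n : ℕ) : Module.End ℝ (V n) :=
  (Polynomial.derivative (R := ℝ)).restrict (p := V n) (q := V n) fun p hp => by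
    rw [V, Polynomial.mem_degreeLT] at hp ⊢
    exact lt_of_le_of_lt Polynomial.degree_derivative_le hp

/-- `γ_m(t) = (t+1)(t+2)⋯(t+m)/m!`. -/
noncomputable def gam (m : ℕ) : ℝ[X] :=
  Polynomial.C ((m.factorial : ℝ))⁻¹ *
    ∏ i ∈ Finset.range m, (Polynomial.X + Polynomial.C (i + 1 : ℝ))

/-- `χ` is the Euler form: the (unique) bilinear form on `V n` with
`χ(γ_n(t+i), γ_n(t+j)) = C(n+j-i, n)` for `0 ≤ i, j ≤ n` (binomial coefficient,
equal to `0` when `n+j-i < n`). -/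
def EulerCond (n : ℕ) (χ : ↥(V n) →ₗ[ℝ] ↥(V n) →ₗ[ℝ] ℝ) : Prop :=
  ∀ (i j : Fin (n + 1)) (f g : V n),
    (f : ℝ[X]) = (gam n).comp (Polynomial.X + Polynomial.C ((i : ℕ) : ℝ)) →
    (g : ℝ[X]) = (gam n).comp (Polynomial.X + Polynomial.C ((j : ℕ) : ℝ)) →
    χ f g = ((n + (j : ℕ) - (i : ℕ)).choose n : ℝ)

/-- `M n ⊂ V n`: the lattice of integer-valued polynomials of degree at most `n`,
as a `ℤ`-submodule of `ℝ[X]` (identified with the Grothendieck group `K₀(ℙ_n)`). -/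
noncomputable def Msub (n : ℕ) : Submodule ℤ ℝ[X] where
  carrier := {p | p.degree < ((n + 1 : ℕ) : WithBot ℕ) ∧
    ∀ m : ℤ, ∃ z : ℤ, p.eval (m : ℝ) = (z : ℝ)}
  zero_mem' :=
    ⟨lt_of_eq_of_lt Polynomial.degree_zero (WithBot.bot_lt_coe _), fun _ => ⟨0, by simp⟩⟩
  add_mem' := by
    rintro p q ⟨hp1, hp2⟩ ⟨hq1, hq2⟩
    refine ⟨lt_of_le_of_lt (Polynomial.degree_add_le p q) (max_lt hp1 hq1), fun m => ?_⟩
    obtain ⟨z1, hz1⟩ := hp2 m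
    obtain ⟨z2, hz2⟩ := hq2 m
    exact ⟨z1 + z2, by simp [hz1, hz2]⟩
  smul_mem' := by
    rintro c p ⟨hp1, hp2⟩
    rw [Set.mem_setOf_eq, zsmul_eq_mul]
    constructor
    · refine lt_of_le_of_lt (le_trans (Polynomial.degree_mul_le _ _) ?_) hp1
      have h0 : ((c : ℝ[X])).degree ≤ 0 := Polynomial.degree_intCast_le c
      calc (c : ℝ[X]).degree + p.degree ≤ 0 + p.degree := by gcongr
        _ = p.degree := by simp
    · intro m
      obtain ⟨z, hz⟩ := hp2 m
      exact ⟨c * z, by simp [hz]⟩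

lemma mem_Msub {n : ℕ} {p : ℝ[X]} :
    p ∈ Msub n ↔ p.degree < ((n + 1 : ℕ) : WithBot ℕ) ∧
      ∀ m : ℤ, ∃ z : ℤ, p.eval (m : ℝ) = (z : ℝ) :=
  Iff.rfl

/-- The inclusion `M n → V n`. -/
noncomputable def ιMV (n : ℕ) (f : Msub n) : V n :=
  ⟨(f : ℝ[X]), Polynomial.mem_degreeLT.mpr (mem_Msub.mp f.2).1⟩

/-- `φ` is a `ℤ`-linear isometry of the lattice `(M_n, χ_n)`. -/
def IsomM (n : ℕ) (χ : ↥(V n) →ₗ[ℝ] ↥(V n) →ₗ[ℝ] ℝ) (φ : Msub n ≃ₗ[ℤ] Msub n) : Prop :=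
  ∀ f g : Msub n, χ (ιMV n (φ f)) (ιMV n (φ g)) = χ (ιMV n f) (ιMV n g)

/-- `φ` is unipotent: `(φ - id)^(n+1) = 0`. -/
def UnipM (n : ℕ) (φ : Msub n ≃ₗ[ℤ] Msub n) : Prop :=
  ((φ.toLinearMap - LinearMap.id : Module.End ℤ (Msub n)) ^ (n + 1)) = 0


open Polynomial Finset

lemma gam_eval (n : ℕ) (x : ℝ) :
    (gam n).eval x = ((n.factorial : ℝ))⁻¹ * ∏ i ∈ range n, (x + (i + 1)) := by
  simp [gam, eval_prod]

lemma prod_cast_int (n : ℕ) (a : ℤ) :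
    ∏ i ∈ range n, ((a : ℝ) + (i + 1)) = ((∏ i ∈ range n, (a + i + 1) : ℤ) : ℝ) := by
  push_cast; exact Finset.prod_congr rfl (fun i _ => by ring)

lemma desc_cast (c n : ℕ) (h : n ≤ c + 1) :
    ((c.descFactorial n : ℕ) : ℤ) = ∏ i ∈ range n, ((c : ℤ) - i) := by
  rw [Nat.descFactorial_eq_prod_range, Nat.cast_prod]
  exact Finset.prod_congr rfl (fun i hi => by simp at hi; omega)

lemma int_prod_eq_nonneg (n : ℕ) (a : ℤ) (ha : 0 ≤ a) (c : ℕ) (hc1 : (c:ℤ) = a + n) :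
    ∏ i ∈ range n, (a + i + 1) = (c.descFactorial n : ℤ) := by
  rw [desc_cast c n (by omega), ← Finset.prod_range_reflect]
  exact Finset.prod_congr rfl (fun i hi => by simp at hi; omega)

lemma int_prod_fact_dvd (n : ℕ) (a : ℤ) :
    (n.factorial : ℤ) ∣ ∏ i ∈ range n, (a + i + 1) := by
  rcases le_or_gt 0 a with ha | ha
  · rw [int_prod_eq_nonneg n a ha (a+n).toNat (by omega)]
    exact Int.natCast_dvd_natCast.mpr (Nat.factorial_dvd_descFactorial _ n)
  · rcases le_or_gt (a + n) 0 with hb | hb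
    · obtain ⟨c, hc1, hc2⟩ : ∃ c : ℕ, (c : ℤ) = -a - 1 ∧ n ≤ c + 1 := ⟨(-a-1).toNat, by omega, by omega⟩
      have key : ∏ i ∈ range n, (a + i + 1) = (-1)^n * (c.descFactorial n : ℤ) := by
        have hconst : ∏ _i ∈ range n, (-1:ℤ) = (-1)^n := by simp
        rw [desc_cast c n hc2, ← hconst, ← Finset.prod_mul_distrib]
        exact Finset.prod_congr rfl (fun i hi => by omega)
      rw [key]
      exact Dvd.dvd.mul_left (Int.natCast_dvd_natCast.mpr (Nat.factorial_dvd_descFactorial c n)) _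
    · refine ⟨0, ?_⟩
      rw [mul_zero]
      apply Finset.prod_eq_zero (i := (-a-1).toNat) (by simp; omega)
      omega

lemma gam_int_val (n : ℕ) (a : ℤ) : ∃ z : ℤ, (gam n).eval (a : ℝ) = (z : ℝ) := by
  obtain ⟨z, hz⟩ := int_prod_fact_dvd n a
  refine ⟨z, ?_⟩
  rw [gam_eval, prod_cast_int, hz]
  have hn : (n.factorial : ℝ) ≠ 0 := by positivity
  push_cast
  field_simp

lemma gam_eval_nat (n d : ℕ) : (gam n).eval ((d : ℤ) : ℝ) = ((n + d).choose n : ℝ) := by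
  rw [gam_eval, prod_cast_int, int_prod_eq_nonneg n d (by positivity) (d+n) (by omega)]
  have : (d+n).descFactorial n = n.factorial * (d+n).choose n := Nat.descFactorial_eq_factorial_mul_choose _ _
  rw [this]
  have hn : (n.factorial : ℝ) ≠ 0 := by positivity
  have h2 : (d+n).choose n = (n+d).choose n := by rw [Nat.add_comm]
  rw [h2]
  push_cast
  field_simp

lemma gam_eval_neg (n : ℕ) (d : ℕ) (h1 : 1 ≤ d) (h2 : d ≤ n) :
    (gam n).eval (((-d : ℤ)) : ℝ) = 0 := by
  rw [gam_eval, prod_cast_int]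
  rw [Finset.prod_eq_zero (i := d - 1) (by simp; omega) (by omega)]
  simp

lemma gam_reflect (n : ℕ) (x : ℝ) :
    (gam n).eval (-x - (n+1)) = (-1)^n * (gam n).eval x := by
  have hconst : ∏ _i ∈ range n, (-1:ℝ) = (-1)^n := by simp
  rw [gam_eval, gam_eval, ← Finset.prod_range_reflect (fun i => (-x - (n+1) + (i+1)))]
  rw [← hconst, mul_comm (∏ _i ∈ range n, (-1:ℝ)), mul_assoc, ← Finset.prod_mul_distrib]
  congr 1
  refine Finset.prod_congr rfl (fun i hi => ?_)
  simp at hi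
  rw [Nat.sub_sub, Nat.cast_sub (by omega : 1 + i ≤ n)]
  push_cast
  ring

lemma gam_eval_zero (n : ℕ) : (gam n).eval 0 = 1 := by
  have h0 := gam_eval_nat n 0
  norm_num at h0
  exact h0

lemma gam_ne_zero (n : ℕ) : gam n ≠ 0 := by
  intro h
  have h0 := gam_eval_zero n
  rw [h] at h0; simp at h0

lemma gam_natDegree (n : ℕ) : (gam n).natDegree = n := by
  rw [gam, natDegree_C_mul (by positivity : ((n.factorial : ℝ))⁻¹ ≠ 0),
    natDegree_prod _ _ (fun i _ => X_add_C_ne_zero _)]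
  have : ∀ i ∈ range n, (X + C ((i:ℝ)+1)).natDegree = 1 := fun i _ => natDegree_X_add_C _
  rw [Finset.sum_congr rfl this]
  simp

lemma gam_comp_mem (n : ℕ) (a : ℝ) : (gam n).comp (X + C a) ∈ V n := by
  have : (gam n).comp (X + C a) = Polynomial.taylor a (gam n) := rfl
  rw [V, Polynomial.mem_degreeLT, this]
  calc (Polynomial.taylor a (gam n)).degree ≤ ((Polynomial.taylor a (gam n)).natDegree : WithBot ℕ) :=
        degree_le_natDegree
    _ = (n : WithBot ℕ) := by rw [Polynomial.natDegree_taylor, gam_natDegree]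
    _ < ((n+1 : ℕ) : WithBot ℕ) := by exact_mod_cast Nat.lt_succ_self n

/-- the curve `a ↦ γ_n(t+a)` in `V n`. -/
noncomputable def bV (n : ℕ) (a : ℝ) : V n := ⟨(gam n).comp (X + C a), gam_comp_mem n a⟩

lemma bV_eval (n : ℕ) (a x : ℝ) : ((bV n a : ℝ[X])).eval x = (gam n).eval (x + a) := by
  simp [bV, eval_comp]

lemma gam_eval_int_zero (n : ℕ) (s : ℤ) (h1 : -n ≤ s) (h2 : s ≤ -1) :
    (gam n).eval ((s : ℤ) : ℝ) = 0 := by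
  have : s = -((-s).toNat : ℤ) := by omega
  rw [this]
  exact gam_eval_neg n (-s).toNat (by omega) (by omega)

lemma gam_eval_neg_big (n : ℕ) : (gam n).eval (((-(n+1) : ℤ)) : ℝ) = (-1)^n := by
  have : ((( -(n+1) : ℤ)) : ℝ) = -(0:ℝ) - (n+1) := by push_cast; ring
  rw [this, gam_reflect, gam_eval_zero, mul_one]

lemma bV_linearIndependent (n : ℕ) :
    LinearIndependent ℝ (fun j : Fin (n+1) => bV n j) := by
  rw [Fintype.linearIndependent_iff]
  intro g hg
  have key : ∀ j : ℕ, j < n + 1 → (∀ k : ℕ, k < j → ∀ hk : k < n+1, g ⟨k, hk⟩ = 0) →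
      ∀ hj : j < n+1, g ⟨j, hj⟩ = 0 := by
    intro j hjn ih hj
    -- evaluate at -(n+j+1)
    have hsum : ((∑ i : Fin (n+1), g i • bV n i : V n) : ℝ[X]) = 0 := by rw [hg]; rfl
    have heval : ∑ i : Fin (n+1), g i * (gam n).eval ((-(n + j + 1 : ℤ) : ℝ) + i) = 0 := by
      have := congrArg (Polynomial.eval ((-(n + j + 1 : ℤ) : ℝ))) hsum
      simpa [eval_finset_sum, bV_eval] using this
    have hterms : ∀ i : Fin (n+1), i ≠ ⟨j, hj⟩ →
        g i * (gam n).eval ((-(n + j + 1 : ℤ) : ℝ) + i) = 0 := by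
      intro i hi
      rcases lt_or_gt_of_ne (fun h => hi (Fin.ext h) : (i : ℕ) ≠ j) with h | h
      · rw [ih i h i.isLt]; ring
      · -- i > j : gam eval zero
        have harg : ((-(n + j + 1 : ℤ) : ℝ) + i) = (((i : ℤ) - n - j - 1 : ℤ) : ℝ) := by
          push_cast; ring
        rw [harg, gam_eval_int_zero n _ (by omega) (by
          have : (i : ℕ) ≤ n := by omega
          omega)]
        ring
    rw [Finset.sum_eq_single ⟨j, hj⟩ (fun i _ hi => hterms i hi) (by simp)] at heval
    have harg : ((-(n + j + 1 : ℤ) : ℝ) + (⟨j, hj⟩ : Fin (n+1))) = (((-(n+1) : ℤ)) : ℝ) := by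
      push_cast; ring
    rw [harg, gam_eval_neg_big] at heval
    have : ((-1 : ℝ))^n ≠ 0 := by positivity
    rcases mul_eq_zero.mp heval with h | h
    · exact h
    · exact absurd h this
  intro i
  obtain ⟨j, hj⟩ := i
  induction j using Nat.strong_induction_on with
  | _ j ih => exact key j hj (fun k hk hk2 => ih k hk hk2) hj

lemma V_finrank (n : ℕ) : Module.finrank ℝ (V n) = n + 1 := by
  have e := Polynomial.degreeLTEquiv ℝ (n+1)
  rw [V]
  rw [LinearEquiv.finrank_eq e]
  simp

/-- the basis `γ_n(t+i)`, `i = 0..n`, of `V n`. -/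
noncomputable def bVB (n : ℕ) : Module.Basis (Fin (n+1)) ℝ (V n) :=
  basisOfLinearIndependentOfCardEqFinrank (bV_linearIndependent n)
    (by rw [V_finrank]; simp)

lemma bVB_apply (n : ℕ) (i : Fin (n+1)) : bVB n i = bV n i := by
  rw [bVB, coe_basisOfLinearIndependentOfCardEqFinrank]

-- grid values
lemma grid_val (n : ℕ) (i j : Fin (n+1)) :
    ((n + (j:ℕ) - (i:ℕ)).choose n : ℝ) = (gam n).eval (((j:ℕ) : ℝ) - ((i:ℕ) : ℝ)) := by
  rcases le_or_gt (i : ℕ) (j : ℕ) with h | h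
  · have h1 : ((j:ℕ) : ℝ) - ((i:ℕ) : ℝ) = ((((j:ℕ) - (i:ℕ) : ℕ) : ℤ) : ℝ) := by
      push_cast [Nat.cast_sub h]; ring
    rw [h1, gam_eval_nat]
    congr 2
    omega
  · have h1 : ((j:ℕ) : ℝ) - ((i:ℕ) : ℝ) = ((-(((i:ℕ) - (j:ℕ) : ℕ) : ℤ) : ℤ) : ℝ) := by
      push_cast [Nat.cast_sub (le_of_lt h)]; ring
    rw [h1, gam_eval_int_zero n _ (by have := i.isLt; omega) (by omega),
      Nat.choose_eq_zero_of_lt (by omega)]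
    simp

-- the monomials in V n
noncomputable def xV (n : ℕ) (j : Fin (n+1)) : V n :=
  ⟨X ^ (j : ℕ), by
    rw [V, Polynomial.mem_degreeLT, degree_X_pow]
    exact_mod_cast j.isLt⟩

lemma bV_expand (n : ℕ) (a : ℝ) :
    bV n a = ∑ j : Fin (n+1), ((Polynomial.hasseDeriv (j:ℕ) (gam n)).eval a) • xV n j := by
  apply Subtype.ext
  push_cast [xV]
  have h1 : (bV n a : ℝ[X]) = Polynomial.taylor a (gam n) := rfl
  rw [h1]
  have h2 : (Polynomial.taylor a (gam n)) = ∑ j ∈ range (n+1), Polynomial.monomial j ((Polynomial.taylor a (gam n)).coeff j) := by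
    apply Polynomial.as_sum_range'
    rw [Polynomial.natDegree_taylor, gam_natDegree]
    omega
  rw [h2, Finset.sum_range fun j => Polynomial.monomial j ((Polynomial.taylor a (gam n)).coeff j)]
  refine Finset.sum_congr rfl (fun j _ => ?_)
  rw [Polynomial.taylor_coeff, Polynomial.smul_X_eq_monomial]

section chi
variable {n : ℕ} (χ : ↥(V n) →ₗ[ℝ] ↥(V n) →ₗ[ℝ] ℝ)

lemma chi_curve_poly (f : V n) (b : ℝ) :
    χ f (bV n b) = (∑ j : Fin (n+1), (χ f (xV n j)) • Polynomial.hasseDeriv (j:ℕ) (gam n)).eval b := by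
  rw [bV_expand, map_sum]
  rw [Polynomial.eval_finset_sum]
  refine Finset.sum_congr rfl (fun j _ => ?_)
  rw [map_smul]
  simp [mul_comm]

lemma chi_bVB (hχ : EulerCond n χ) (i j : Fin (n+1)) :
    χ (bVB n i) (bVB n j) = ((n + (j:ℕ) - (i:ℕ)).choose n : ℝ) := by
  rw [bVB_apply, bVB_apply]
  exact hχ i j _ _ rfl rfl

/-- Key: `χ(γ(t+i), γ(t+b)) = γ(b - i)` for all real `b`. -/
lemma chi_key
    (hχ : ∀ (i j : Fin (n + 1)), χ (bVB n i) (bVB n j) = ((n + (j:ℕ) - (i:ℕ)).choose n : ℝ))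
    (i : Fin (n+1)) (b : ℝ) :
    χ (bVB n i) (bV n b) = (gam n).eval (b - ((i:ℕ):ℝ)) := by
  set P := ∑ j : Fin (n+1), (χ (bVB n i) (xV n j)) • Polynomial.hasseDeriv (j:ℕ) (gam n) with hP
  set R := P - (gam n).comp (X - C ((i:ℕ):ℝ)) with hR
  have hdegP : P.natDegree < n + 1 := by
    apply lt_of_le_of_lt (Polynomial.natDegree_sum_le_of_forall_le _ _ ?_) (by omega : n < n+1)
    intro j _
    apply le_trans (Polynomial.natDegree_smul_le _ _)
    rw [Polynomial.natDegree_hasseDeriv, gam_natDegree]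
    omega
  have hdegC : ((gam n).comp (X - C ((i:ℕ):ℝ))).natDegree < n + 1 := by
    rw [Polynomial.natDegree_comp, gam_natDegree, Polynomial.natDegree_X_sub_C]
    omega
  have hRzero : R = 0 := by
    apply Polynomial.eq_zero_of_natDegree_lt_card_of_eval_eq_zero R
      (f := fun j : Fin (n+1) => ((j:ℕ):ℝ))
    · intro a b hab
      simp only at hab
      apply Fin.ext
      exact_mod_cast hab
    · intro j
      rw [hR, Polynomial.eval_sub, Polynomial.eval_comp]
      have h1 : (gam n).eval ((X - C ((i:ℕ):ℝ)).eval ((j:ℕ):ℝ)) = (gam n).eval (((j:ℕ):ℝ) - ((i:ℕ):ℝ)) := by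
        simp
      rw [h1, ← grid_val n i j]
      have h3 : P.eval ((j:ℕ):ℝ) = χ (bVB n i) (bV n ((j:ℕ):ℝ)) := (chi_curve_poly χ (bVB n i) ((j:ℕ):ℝ)).symm
      rw [h3]
      have h2 : bV n ((j:ℕ):ℝ) = bVB n j := (bVB_apply n j).symm
      rw [h2, hχ i j]
      ring
    · rw [Fintype.card_fin]
      apply lt_of_le_of_lt (Polynomial.natDegree_sub_le _ _)
      exact max_lt hdegP hdegC
  have : P.eval b = ((gam n).comp (X - C ((i:ℕ):ℝ))).eval b := by
    have := sub_eq_zero.mp hRzero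
    rw [this]
  rw [chi_curve_poly χ (bVB n i) b]
  have h4 : P.eval b = ((gam n).comp (X - C ((i:ℕ):ℝ))).eval b := this
  rw [h4, Polynomial.eval_comp]
  simp
end chi

lemma mem_V_natDegree {n : ℕ} {p : ℝ[X]} (hp : p ∈ V n) : p.natDegree ≤ n := by
  rw [V, Polynomial.mem_degreeLT] at hp
  rw [Polynomial.natDegree_le_iff_degree_le]
  exact Order.le_of_lt_succ (by exact_mod_cast hp)

lemma natDegree_mem_V {n : ℕ} {p : ℝ[X]} (hp : p.natDegree ≤ n) : p ∈ V n := by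
  rw [V, Polynomial.mem_degreeLT]
  calc p.degree ≤ (p.natDegree : WithBot ℕ) := degree_le_natDegree
    _ ≤ (n : WithBot ℕ) := by exact_mod_cast hp
    _ < ((n+1 : ℕ) : WithBot ℕ) := by exact_mod_cast Nat.lt_succ_self n

lemma taylor_mem_V {n : ℕ} (r : ℝ) {p : ℝ[X]} (hp : p ∈ V n) :
    Polynomial.taylor r p ∈ V n := by
  apply natDegree_mem_V
  rw [Polynomial.natDegree_taylor]
  exact mem_V_natDegree hp

/-- the shift `f(t) ↦ f(t - (n+1))` on `V n`. -/
noncomputable def Sop (n : ℕ) : Module.End ℝ (V n) :=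
  (Polynomial.taylor (-(n+1) : ℝ)).restrict (p := V n) (q := V n) (fun _ hp => taylor_mem_V _ hp)

noncomputable def Nop (n : ℕ) : Module.End ℝ (V n) := Sop n - 1

lemma Nop_coe (n : ℕ) (f : V n) :
    ((Nop n f : V n) : ℝ[X]) = Polynomial.taylor (-(n+1) : ℝ) (f : ℝ[X]) - (f : ℝ[X]) := by
  rfl

-- taylor coefficient facts
lemma taylor_coeff_eq_of_le (c : ℝ) (g : ℝ[X]) (j : ℕ) (h : g.natDegree ≤ j) :
    (Polynomial.taylor c g).coeff j = g.coeff j := by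
  rw [Polynomial.taylor_coeff]
  have hh : Polynomial.hasseDeriv j g = C (g.coeff j) := by
    ext m
    rw [Polynomial.hasseDeriv_coeff, Polynomial.coeff_C]
    rcases Nat.eq_zero_or_pos m with hm | hm
    · subst hm; simp
    · have h1 : g.coeff (m + j) = 0 := Polynomial.coeff_eq_zero_of_natDegree_lt (by omega)
      simp [h1, if_neg (by omega : ¬ m = 0)]
  rw [hh]
  simp

lemma natDegree_taylor_sub (c : ℝ) (g : ℝ[X]) (m : ℕ) (h : g.natDegree ≤ m + 1) :
    (Polynomial.taylor c g - g).natDegree ≤ m := by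
  rw [Polynomial.natDegree_le_iff_coeff_eq_zero]
  intro N hN
  rw [Polynomial.coeff_sub, taylor_coeff_eq_of_le c g N (by omega), sub_self]

lemma taylor_sub_coeff_top (c : ℝ) (g : ℝ[X]) (m : ℕ) (h : g.natDegree ≤ m + 1) :
    (Polynomial.taylor c g - g).coeff m = (m+1) * c * g.coeff (m+1) := by
  rw [Polynomial.coeff_sub, Polynomial.taylor_coeff]
  have hh : Polynomial.hasseDeriv m g = C (g.coeff m) + C ((m+1) * g.coeff (m+1)) * X := by
    ext k
    rw [Polynomial.hasseDeriv_coeff]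
    match k with
    | 0 => simp
    | 1 =>
      have hc : (1+m).choose m = m+1 := by rw [add_comm]; exact Nat.choose_succ_self_right m
      rw [hc, Polynomial.coeff_add, Polynomial.coeff_C, Polynomial.coeff_C_mul,
        Polynomial.coeff_X_one]
      simp [add_comm 1 m]
    | (k+2) =>
      have h1 : g.coeff (k + 2 + m) = 0 := Polynomial.coeff_eq_zero_of_natDegree_lt (by omega)
      rw [Polynomial.coeff_add, Polynomial.coeff_C, Polynomial.coeff_C_mul, Polynomial.coeff_X]
      simp [h1]
  rw [hh]
  simp
  ring

-- iterated degree drop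
lemma Nop_pow_natDegree (n : ℕ) (k : ℕ) (f : V n) (m : ℕ)
    (h : (f : ℝ[X]).natDegree ≤ m + k) :
    (((Nop n ^ k) f : V n) : ℝ[X]).natDegree ≤ m := by
  induction k generalizing f with
  | zero => simpa using h
  | succ k ih =>
    have hstep : ((Nop n ^ (k+1)) f) = (Nop n ^ k) (Nop n f) := by
      rw [pow_succ, Module.End.mul_apply]
    rw [hstep]
    apply ih
    rw [Nop_coe]
    exact natDegree_taylor_sub _ _ _ (by omega)

lemma Nop_pow_eq_zero (n : ℕ) : (Nop n) ^ (n + 1) = 0 := by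
  ext f
  have h1 : ((Nop n ^ (n+1)) f) = Nop n ((Nop n ^ n) f) := by
    rw [pow_succ', Module.End.mul_apply]
  have h2 : (((Nop n ^ n) f : V n) : ℝ[X]).natDegree ≤ 0 :=
    Nop_pow_natDegree n n f 0 (by simpa using mem_V_natDegree f.2)
  obtain ⟨a, ha⟩ := Polynomial.natDegree_eq_zero.mp (Nat.le_zero.mp h2)
  have h3 : Nop n ((Nop n ^ n) f) = 0 := by
    apply Subtype.ext
    rw [Nop_coe, ← ha, Polynomial.taylor_C]
    simp
  rw [h1, h3]
  simp

-- non-degeneracy of the top iterate on e₀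
lemma Nop_pow_coeff_ne (n : ℕ) (k : ℕ) (hk : k ≤ n) :
    (((Nop n ^ k) (bV n 0) : V n) : ℝ[X]).coeff (n - k) ≠ 0 := by
  induction k with
  | zero =>
    have h0 : ((bV n 0 : V n) : ℝ[X]) = gam n := by
      show (gam n).comp (X + C 0) = gam n
      simp
    rw [pow_zero, Module.End.one_apply, h0]
    have : (gam n).coeff n = ((n.factorial : ℝ))⁻¹ := by
      rw [gam, Polynomial.coeff_C_mul]
      have hm : (∏ i ∈ range n, (X + C ((i : ℝ) + 1))).Monic :=
        monic_prod_of_monic _ _ (fun i _ => monic_X_add_C _)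
      have hdeg : (∏ i ∈ range n, (X + C ((i : ℝ) + 1))).natDegree = n := by
        rw [Polynomial.natDegree_prod _ _ (fun i _ => X_add_C_ne_zero _)]
        have : ∀ i ∈ range n, (X + C ((i:ℝ)+1)).natDegree = 1 := fun i _ => natDegree_X_add_C _
        rw [Finset.sum_congr rfl this]
        simp
      have := hm.leadingCoeff
      rw [Polynomial.leadingCoeff, hdeg] at this
      rw [this, mul_one]
    rw [Nat.sub_zero, this]
    positivity
  | succ k ih =>
    have hk' : k ≤ n := by omega
    set g := (((Nop n ^ k) (bV n 0) : V n) : ℝ[X]) with hg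
    have hdeg : g.natDegree ≤ n - k :=
      Nop_pow_natDegree n k _ (n - k) (by
        have := mem_V_natDegree (bV n 0).2
        omega)
    have hstep : ((Nop n ^ (k+1)) (bV n 0)) = Nop n ((Nop n ^ k) (bV n 0)) := by
      rw [pow_succ', Module.End.mul_apply]
    rw [hstep, Nop_coe, ← hg]
    have hm : n - k = (n - (k+1)) + 1 := by omega
    rw [hm] at hdeg
    have := taylor_sub_coeff_top (-(n+1) : ℝ) g (n - (k+1)) hdeg
    rw [this, ← hm]
    have hne : g.coeff (n - k) ≠ 0 := ih hk'
    have h1 : ((n - (k+1) : ℕ) : ℝ) + 1 ≠ 0 := by positivity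
    have h2 : (-(n+1) : ℝ) ≠ 0 := by
      have : (0:ℝ) < (n:ℝ) + 1 := by positivity
      linarith
    exact mul_ne_zero (mul_ne_zero h1 h2) hne

lemma Nop_pow_n_ne_zero (n : ℕ) : (Nop n ^ n) (bV n 0) ≠ 0 := by
  intro h
  have := Nop_pow_coeff_ne n n le_rfl
  rw [h] at this
  simp at this

lemma neg_one_pow_sq (n : ℕ) : ((-1:ℝ))^n * (-1)^n = 1 := by
  rw [← pow_add]
  exact Even.neg_one_pow ⟨n, by ring⟩

section chi
variable {n : ℕ} (χ : ↥(V n) →ₗ[ℝ] ↥(V n) →ₗ[ℝ] ℝ)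
  (hχ : ∀ (i j : Fin (n + 1)), χ (bVB n i) (bVB n j) = ((n + (j:ℕ) - (i:ℕ)).choose n : ℝ))

lemma Sop_bV (a : ℝ) : Sop n (bV n a) = bV n (a - (n+1)) := by
  apply Subtype.ext
  show Polynomial.taylor (-(n+1) : ℝ) ((gam n).comp (X + C a)) = (gam n).comp (X + C (a - (n+1)))
  have h1 : (gam n).comp (X + C a) = Polynomial.taylor a (gam n) := rfl
  have h2 : (gam n).comp (X + C (a - (n+1))) = Polynomial.taylor (a - (n+1)) (gam n) := rfl
  rw [h1, h2, Polynomial.taylor_taylor]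
  congr 1
  ring

include hχ

lemma serre : ∀ f g : V n, χ f g = ((-1:ℝ))^n * χ g (Sop n f) := by
  have key : χ = ((-1:ℝ)^n) • LinearMap.compl₁₂ χ.flip (Sop n) LinearMap.id := by
    apply LinearMap.ext_basis (bVB n) (bVB n)
    intro i j
    rw [LinearMap.smul_apply, LinearMap.smul_apply, smul_eq_mul,
      LinearMap.compl₁₂_apply, LinearMap.id_apply, LinearMap.flip_apply]
    rw [hχ i j]
    have h1 : Sop n (bVB n i) = bV n (((i:ℕ):ℝ) - (n+1)) := by rw [bVB_apply, Sop_bV]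
    rw [h1, chi_key χ hχ j]
    have h2 : (((i:ℕ):ℝ) - (n+1) - ((j:ℕ):ℝ)) = -((((j:ℕ):ℝ)) - ((i:ℕ):ℝ)) - (n+1) := by ring
    rw [h2, gam_reflect, grid_val n i j, ← mul_assoc]
    rw [neg_one_pow_sq, one_mul]
  intro f g
  conv_lhs => rw [key]
  rw [LinearMap.smul_apply, LinearMap.smul_apply, smul_eq_mul,
    LinearMap.compl₁₂_apply, LinearMap.id_apply, LinearMap.flip_apply]

lemma chi_nondeg : ∀ w : V n, (∀ f : V n, χ f w = 0) → w = 0 := by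
  intro w hw
  set c := (bVB n).repr w with hc
  have hval : ∀ i : Fin (n+1), ∑ j : Fin (n+1), c j * (gam n).eval (((j:ℕ):ℝ) - ((i:ℕ):ℝ)) = 0 := by
    intro i
    have h1 : χ (bVB n i) w = 0 := hw _
    conv_lhs at h1 => rw [← Module.Basis.sum_repr (bVB n) w]
    rw [map_sum] at h1
    rw [← h1]
    refine Finset.sum_congr rfl (fun j _ => ?_)
    rw [map_smul, smul_eq_mul, hχ i j, grid_val n i j]
  have hzero : ∀ d : ℕ, ∀ i : Fin (n+1), n ≤ (i : ℕ) + d → c i = 0 := by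
    intro d
    induction d with
    | zero =>
      intro i hi
      have hin : (i : ℕ) = n := by have := i.isLt; omega
      have := hval i
      rw [Finset.sum_eq_single i ?_ (by simp)] at this
      · have h0 : (gam n).eval (((i:ℕ):ℝ) - ((i:ℕ):ℝ)) = 1 := by
          rw [sub_self, gam_eval_zero]
        rw [h0, mul_one] at this; exact this
      · intro j _ hj
        have hjlt : (j : ℕ) < n := by
          have := j.isLt
          rcases Nat.lt_or_ge (j:ℕ) n with h | h
          · exact h
          · exfalso; exact hj (Fin.ext (by omega))
        have harg : (((j:ℕ):ℝ) - ((i:ℕ):ℝ)) = (((j:ℕ) - (i:ℕ) : ℤ) : ℝ) := by push_cast; ring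
        rw [harg, gam_eval_int_zero n _ (by omega) (by omega), mul_zero]
    | succ d ih =>
      intro i hi
      rcases Nat.lt_or_ge (i:ℕ) (n - d) with hlt | hge
      · -- i = n - d - 1 exactly (or smaller, but combined with hi: i + d + 1 ≥ n)
        have := hval i
        rw [Finset.sum_eq_single i ?_ (by simp)] at this
        · have h0 : (gam n).eval (((i:ℕ):ℝ) - ((i:ℕ):ℝ)) = 1 := by
            rw [sub_self, gam_eval_zero]
          rw [h0, mul_one] at this; exact this
        · intro j _ hj
          rcases Nat.lt_or_ge (j:ℕ) (i:ℕ) with h | h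
          · have harg : (((j:ℕ):ℝ) - ((i:ℕ):ℝ)) = (((j:ℕ) - (i:ℕ) : ℤ) : ℝ) := by push_cast; ring
            have hbd : (i:ℕ) - (j:ℕ) ≤ n := by have := i.isLt; omega
            rw [harg, gam_eval_int_zero n _ (by omega) (by omega), mul_zero]
          · have hgt : (i:ℕ) < (j:ℕ) := by
              rcases Nat.eq_or_lt_of_le h with h' | h'
              · exact absurd (Fin.ext h'.symm : j = i) hj
              · exact h'
            rw [ih j (by omega), zero_mul]
      · exact ih i (by omega)
  have : ∀ i, c i = 0 := fun i => hzero n i (by omega)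
  have hsum := Module.Basis.sum_repr (bVB n) w
  rw [← hsum]
  refine Finset.sum_eq_zero (fun i _ => ?_)
  rw [hc] at this
  rw [this i, zero_smul]

lemma commutes (Φ : Module.End ℝ (V n)) (hiso : ∀ f g : V n, χ (Φ f) (Φ g) = χ f g)
    (hsurj : Function.Surjective Φ) : Φ * Sop n = Sop n * Φ := by
  have key : ∀ g : V n, Sop n (Φ g) = Φ (Sop n g) := by
    intro g
    have h1 : ∀ f : V n, χ f (Sop n (Φ g) - Φ (Sop n g)) = 0 := by
      intro f'
      obtain ⟨f, rfl⟩ := hsurj f'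
      rw [map_sub]
      have e1 : χ (Φ f) (Sop n (Φ g)) = (-1:ℝ)^n * χ (Φ g) (Φ f) := by
        have hs := serre χ hχ (Φ g) (Φ f)
        calc χ (Φ f) (Sop n (Φ g)) = 1 * χ (Φ f) (Sop n (Φ g)) := by ring
          _ = (-1:ℝ)^n * ((-1:ℝ)^n * χ (Φ f) (Sop n (Φ g))) := by
              rw [← mul_assoc, neg_one_pow_sq, one_mul]
          _ = (-1:ℝ)^n * χ (Φ g) (Φ f) := by rw [← hs]
      have e2 : χ (Φ f) (Φ (Sop n g)) = (-1:ℝ)^n * χ (Φ g) (Φ f) := by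
        rw [hiso f (Sop n g)]
        have h3 := serre χ hχ g f
        have h4 : χ f (Sop n g) = (-1:ℝ)^n * χ g f := by
          rw [h3, ← mul_assoc, neg_one_pow_sq, one_mul]
        rw [h4, ← hiso g f]
      rw [e1, e2, sub_self]
    have := chi_nondeg χ hχ _ h1
    exact sub_eq_zero.mp this
  ext g
  rw [Module.End.mul_apply, Module.End.mul_apply, key]

end chi

lemma Nop_pow_eq_zero_of_ge (n : ℕ) {m : ℕ} (hm : n + 1 ≤ m) : (Nop n) ^ m = 0 := by
  have : (Nop n) ^ m = (Nop n) ^ (m - (n+1)) * (Nop n) ^ (n+1) := by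
    rw [← pow_add]
    congr 1
    omega
  rw [this, Nop_pow_eq_zero, mul_zero]

lemma cyclic_independent (n : ℕ) :
    LinearIndependent ℝ (fun k : Fin (n+1) => (Nop n ^ (k:ℕ)) (bV n 0)) := by
  rw [Fintype.linearIndependent_iff]
  intro g hg
  have key : ∀ k : ℕ, k < n + 1 → (∀ m : ℕ, m < k → ∀ hm : m < n+1, g ⟨m, hm⟩ = 0) →
      ∀ hk : k < n+1, g ⟨k, hk⟩ = 0 := by
    intro k hkn ih hk
    have happ := congrArg (fun x => ((Nop n) ^ (n - k)) x) hg
    simp only [map_sum, map_smul, map_zero] at happ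
    have hterm : ∀ i : Fin (n+1), i ≠ ⟨k, hk⟩ →
        g i • ((Nop n) ^ (n-k)) (((Nop n) ^ (i:ℕ)) (bV n 0)) = 0 := by
      intro i hi
      rcases lt_or_gt_of_ne (fun h => hi (Fin.ext h) : (i : ℕ) ≠ k) with h | h
      · rw [ih i h i.isLt, zero_smul]
      · have hcomp : ((Nop n) ^ (n-k)) (((Nop n) ^ (i:ℕ)) (bV n 0)) =
            ((Nop n) ^ (n-k+(i:ℕ))) (bV n 0) := by
          rw [pow_add, Module.End.mul_apply]
        rw [hcomp, Nop_pow_eq_zero_of_ge n (by omega), LinearMap.zero_apply, smul_zero]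
    rw [Finset.sum_eq_single ⟨k, hk⟩ (fun i _ hi => hterm i hi) (by simp)] at happ
    have hcomp : ((Nop n) ^ (n-k)) (((Nop n) ^ k) (bV n 0)) = ((Nop n) ^ n) (bV n 0) := by
      rw [← Module.End.mul_apply, ← pow_add]
      congr 2
      omega
    simp only [] at happ
    rw [hcomp] at happ
    exact (smul_eq_zero.mp happ).resolve_right (Nop_pow_n_ne_zero n)
  intro i
  obtain ⟨k, hk⟩ := i
  induction k using Nat.strong_induction_on with
  | _ k ih => exact key k hk (fun m hm hm2 => ih m hm hm2) hk

noncomputable def cycB (n : ℕ) : Module.Basis (Fin (n+1)) ℝ (V n) :=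
  basisOfLinearIndependentOfCardEqFinrank (cyclic_independent n)
    (by rw [V_finrank]; simp)

lemma cycB_apply (n : ℕ) (k : Fin (n+1)) : cycB n k = (Nop n ^ (k:ℕ)) (bV n 0) := by
  rw [cycB, coe_basisOfLinearIndependentOfCardEqFinrank]

lemma central (n : ℕ) (Φ : Module.End ℝ (V n)) (hcomm : Φ * Nop n = Nop n * Φ) :
    ∃ c : Fin (n+1) → ℝ, Φ = ∑ k : Fin (n+1), c k • (Nop n)^(k:ℕ) := by
  have hcommpow : ∀ m : ℕ, Φ * (Nop n)^m = (Nop n)^m * Φ :=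
    fun m => ((Commute.symm hcomm).pow_left m).symm
  set c : Fin (n+1) → ℝ := fun k => (cycB n).repr (Φ (bV n 0)) k with hc
  refine ⟨c, ?_⟩
  apply Module.Basis.ext (cycB n)
  intro k
  rw [cycB_apply]
  have lhs : Φ ((Nop n ^ (k:ℕ)) (bV n 0)) = (Nop n ^ (k:ℕ)) (Φ (bV n 0)) := by
    rw [← Module.End.mul_apply, hcommpow, Module.End.mul_apply]
  rw [lhs]
  have hrepr : Φ (bV n 0) = ∑ j : Fin (n+1), c j • (Nop n ^ (j:ℕ)) (bV n 0) := by
    conv_lhs => rw [← Module.Basis.sum_repr (cycB n) (Φ (bV n 0))]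
    exact Finset.sum_congr rfl (fun j _ => by rw [hc, cycB_apply])
  rw [hrepr, map_sum, LinearMap.sum_apply]
  refine Finset.sum_congr rfl (fun j _ => ?_)
  rw [map_smul, LinearMap.smul_apply]
  congr 1
  rw [← Module.End.mul_apply, ← Module.End.mul_apply, ← pow_add, ← pow_add, Nat.add_comm]

noncomputable def oneV (n : ℕ) : V n :=
  ⟨(1 : ℝ[X]), by
    rw [V, Polynomial.mem_degreeLT, Polynomial.degree_one]
    exact_mod_cast Nat.zero_lt_succ n⟩

lemma oneV_ne_zero (n : ℕ) : oneV n ≠ 0 := by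
  intro h
  have : ((oneV n : V n) : ℝ[X]) = 0 := by rw [h]; rfl
  exact one_ne_zero this

lemma Nop_oneV (n : ℕ) : Nop n (oneV n) = 0 := by
  apply Subtype.ext
  show Polynomial.taylor (-(n+1) : ℝ) (1 : ℝ[X]) - (1:ℝ[X]) = 0
  rw [Polynomial.taylor_one]
  simp

lemma Nop_pow_oneV (n : ℕ) (k : ℕ) (hk : 1 ≤ k) : ((Nop n)^k) (oneV n) = 0 := by
  have : ((Nop n)^k) (oneV n) = ((Nop n)^(k-1)) (Nop n (oneV n)) := by
    rw [← Module.End.mul_apply, ← pow_succ]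
    congr 2
    omega
  rw [this, Nop_oneV, map_zero]

/-- Main structural dichotomy on the `V` side. -/
lemma main_V (n : ℕ) (Φ : Module.End ℝ (V n)) (hcomm : Φ * Nop n = Nop n * Φ) :
    ∃ c0 : ℝ, Φ (oneV n) = c0 • oneV n ∧ (c0 = 1 → (Φ - 1)^(n+1) = 0) := by
  obtain ⟨c, hΦ⟩ := central n Φ hcomm
  set d : ℕ → ℝ := fun k => if h : k < n+1 then c ⟨k, h⟩ else 0 with hd
  have hΦ' : Φ = ∑ k ∈ range (n+1), d k • (Nop n)^k := by
    rw [hΦ, ← Fin.sum_univ_eq_sum_range (fun k => d k • (Nop n)^k) (n+1)]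
    refine Finset.sum_congr rfl (fun k _ => ?_)
    rw [hd]
    simp [k.isLt]
  refine ⟨d 0, ?_, ?_⟩
  · rw [hΦ', LinearMap.sum_apply, Finset.sum_eq_single 0 ?_ (by simp)]
    · simp
    · intro k _ hk
      rw [LinearMap.smul_apply, Nop_pow_oneV n k (by omega), smul_zero]
  · intro hc0
    have hsub : Φ - 1 = Nop n * (∑ k ∈ range n, d (k+1) • (Nop n)^k) := by
      rw [hΦ', Finset.sum_range_succ']
      rw [hc0]
      simp only [pow_zero, one_smul]
      rw [add_sub_cancel_right (∑ k ∈ range n, d (k+1) • (Nop n)^(k+1)) 1, Finset.mul_sum]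
      refine Finset.sum_congr rfl (fun k _ => ?_)
      rw [mul_smul_comm, ← pow_succ']
    set R := ∑ k ∈ range n, d (k+1) • (Nop n)^k with hR
    have hcommR : Commute (Nop n) R := by
      rw [hR]
      apply Commute.sum_right
      intro k _
      exact (Commute.pow_right (Commute.refl (Nop n)) k).smul_right _
    rw [hsub, hcommR.mul_pow, Nop_pow_eq_zero, zero_mul]

/-- the lattice basis elements. -/
noncomputable def eM (n : ℕ) (i : Fin (n+1)) : Msub n :=
  ⟨(gam n).comp (X + C ((i:ℕ) : ℝ)), by
    rw [mem_Msub]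
    constructor
    · exact Polynomial.mem_degreeLT.mp (gam_comp_mem n _)
    · intro m
      obtain ⟨z, hz⟩ := gam_int_val n (m + (i:ℕ))
      refine ⟨z, ?_⟩
      rw [Polynomial.eval_comp]
      have : (X + C ((i:ℕ):ℝ)).eval ((m:ℤ):ℝ) = (((m + (i:ℕ) : ℤ)) : ℝ) := by
        push_cast; simp
      rw [this, hz]⟩

lemma iota_eM (n : ℕ) (i : Fin (n+1)) : ιMV n (eM n i) = bVB n i := by
  rw [bVB_apply]
  apply Subtype.ext
  rfl

noncomputable def oneM (n : ℕ) : Msub n :=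
  ⟨(1 : ℝ[X]), by
    rw [mem_Msub]
    exact ⟨by rw [Polynomial.degree_one]; exact_mod_cast Nat.zero_lt_succ n,
      fun m => ⟨1, by simp⟩⟩⟩

lemma iota_oneM (n : ℕ) : ιMV n (oneM n) = oneV n := Subtype.ext rfl

lemma iota_add (n : ℕ) (x y : Msub n) : ιMV n (x + y) = ιMV n x + ιMV n y := Subtype.ext rfl
lemma iota_sub (n : ℕ) (x y : Msub n) : ιMV n (x - y) = ιMV n x - ιMV n y := Subtype.ext rfl
lemma iota_zsmul (n : ℕ) (z : ℤ) (x : Msub n) : ιMV n (z • x) = (z : ℝ) • ιMV n x := by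
  apply Subtype.ext
  show z • (x : ℝ[X]) = (z:ℝ) • (x : ℝ[X])
  rw [zsmul_eq_mul, Polynomial.smul_eq_C_mul]
  push_cast
  rfl
lemma iota_inj (n : ℕ) {x y : Msub n} (h : ιMV n x = ιMV n y) : x = y :=
  Subtype.ext (congrArg Subtype.val h : ((ιMV n x : V n) : ℝ[X]) = ((ιMV n y : V n) : ℝ[X]))

/-- rational (integer after scaling) coordinates of lattice elements. -/
lemma rat_coords (n : ℕ) (x : Msub n) :
    ∃ k : ℤ, k ≠ 0 ∧ ∃ z : Fin (n+1) → ℤ,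
      (k : ℝ) • (x : ℝ[X]) = ∑ i : Fin (n+1), (z i : ℝ) • ((eM n i : Msub n) : ℝ[X]) := by
  classical
  set c : Fin (n+1) → ℝ := fun i => (bVB n).repr (ιMV n x) i with hc
  have hx : (x : ℝ[X]) = ∑ i : Fin (n+1), c i • ((bVB n i : V n) : ℝ[X]) := by
    have h1 := Module.Basis.sum_repr (bVB n) (ιMV n x)
    have h2 := congrArg (Subtype.val : V n → ℝ[X]) h1
    have h4 : ((∑ i : Fin (n+1), ((bVB n).repr (ιMV n x)) i • bVB n i : V n) : ℝ[X])
        = ∑ i : Fin (n+1), c i • ((bVB n i : V n) : ℝ[X]) := by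
      push_cast [hc]
      rfl
    exact (h2.symm).trans h4
  -- integer value matrices
  set W : Matrix (Fin (n+1)) (Fin (n+1)) ℤ := fun m i =>
    Classical.choose ((mem_Msub.mp (eM n i).2).2 (m : ℕ)) with hW
  have hWspec : ∀ m i : Fin (n+1), ((eM n i : Msub n) : ℝ[X]).eval (((m:ℕ):ℤ) : ℝ) = ((W m i : ℤ) : ℝ) :=
    fun m i => Classical.choose_spec ((mem_Msub.mp (eM n i).2).2 (m : ℕ))
  set w : Fin (n+1) → ℤ := fun m => Classical.choose ((mem_Msub.mp x.2).2 (m : ℕ)) with hw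
  have hwspec : ∀ m : Fin (n+1), ((x : ℝ[X])).eval (((m:ℕ):ℤ) : ℝ) = ((w m : ℤ) : ℝ) :=
    fun m => Classical.choose_spec ((mem_Msub.mp x.2).2 (m : ℕ))
  -- W *ᵥ c = w (over ℝ)
  have hWc : (W.map ⇑(Int.castRingHom ℝ)).mulVec c = fun m => ((w m : ℤ) : ℝ) := by
    funext m
    rw [Matrix.mulVec, dotProduct]
    rw [← hwspec m]
    conv_rhs => rw [hx]
    rw [Polynomial.eval_finset_sum]
    refine Finset.sum_congr rfl (fun i _ => ?_)
    rw [Polynomial.eval_smul, smul_eq_mul, bVB_apply]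
    have : ((bV n ((i:ℕ):ℝ) : V n) : ℝ[X]) = ((eM n i : Msub n) : ℝ[X]) := rfl
    rw [this, hWspec m i, Matrix.map_apply, Int.coe_castRingHom]
    ring
  -- det W ≠ 0
  have hdet : W.det ≠ 0 := by
    intro hdet0
    obtain ⟨v, hv0, hv⟩ := Matrix.exists_mulVec_eq_zero_iff.mpr hdet0
    -- the polynomial Σ (v i) • e_i vanishes at 0..n
    set u : V n := ∑ i : Fin (n+1), ((v i : ℤ) : ℝ) • bVB n i with hu
    have huval : ((u : V n) : ℝ[X]) = ∑ i : Fin (n+1), ((v i : ℤ) : ℝ) • ((bVB n i : V n) : ℝ[X]) := by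
      push_cast [hu]
      rfl
    have hueval : ∀ m : Fin (n+1), ((u : V n) : ℝ[X]).eval (((m:ℕ)) : ℝ) = 0 := by
      intro m
      rw [huval, Polynomial.eval_finset_sum]
      have hvm : (∑ i, W m i * v i : ℤ) = 0 := congrFun hv m
      have : ∑ i, ((W m i : ℤ) : ℝ) * (v i : ℝ) = 0 := by
        have h6 : ((∑ i, W m i * v i : ℤ) : ℝ) = 0 := by rw [hvm]; simp
        push_cast at h6
        exact h6
      rw [← this]
      refine Finset.sum_congr rfl (fun i _ => ?_)
      rw [Polynomial.eval_smul, smul_eq_mul, bVB_apply]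
      have h3 : ((bV n ((i:ℕ):ℝ) : V n) : ℝ[X]) = ((eM n i : Msub n) : ℝ[X]) := rfl
      have h4 : (((m:ℕ):ℝ)) = ((((m:ℕ):ℤ)) : ℝ) := by push_cast; rfl
      rw [h3, h4, hWspec m i]
      ring
    have hu0 : ((u : V n) : ℝ[X]) = 0 := by
      apply Polynomial.eq_zero_of_natDegree_lt_card_of_eval_eq_zero _
        (f := fun m : Fin (n+1) => ((m:ℕ) : ℝ))
      · intro a b hab
        simp only at hab
        exact Fin.ext (by exact_mod_cast hab)
      · exact hueval
      · rw [Fintype.card_fin]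
        exact Nat.lt_succ_of_le (mem_V_natDegree u.2)
    have : ∀ i, ((v i : ℤ) : ℝ) = 0 := by
      have hind := (bVB n).linearIndependent
      rw [Fintype.linearIndependent_iff] at hind
      exact hind (fun i => ((v i : ℤ) : ℝ)) (by rw [← hu]; exact Subtype.ext hu0)
    exact hv0 (funext fun i => by exact_mod_cast this i)
  -- k = det W, z = adjugate W *ᵥ w
  refine ⟨W.det, hdet, W.adjugate.mulVec w, ?_⟩
  have hadj : (W.adjugate.map ⇑(Int.castRingHom ℝ)).mulVec ((W.map ⇑(Int.castRingHom ℝ)).mulVec c)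
      = ((W.det : ℤ) : ℝ) • c := by
    rw [Matrix.mulVec_mulVec, ← Matrix.map_mul (f := Int.castRingHom ℝ), Matrix.adjugate_mul]
    have : ((W.det • (1 : Matrix (Fin (n+1)) (Fin (n+1)) ℤ)).map ⇑(Int.castRingHom ℝ))
        = ((W.det : ℤ) : ℝ) • (1 : Matrix (Fin (n+1)) (Fin (n+1)) ℝ) := by
      ext a b
      rw [Matrix.map_apply, Matrix.smul_apply, Matrix.smul_apply, Matrix.one_apply, Matrix.one_apply]
      split <;> simp
    rw [this, Matrix.smul_mulVec, Matrix.one_mulVec]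
  rw [hWc] at hadj
  have hcoord : ∀ i, ((W.det : ℤ) : ℝ) * c i = ((W.adjugate.mulVec w i : ℤ) : ℝ) := by
    intro i
    have h5 := congrFun hadj i
    rw [Pi.smul_apply, smul_eq_mul] at h5
    rw [← h5]
    rw [Matrix.mulVec, Matrix.mulVec, dotProduct, dotProduct]
    push_cast
    refine Finset.sum_congr rfl (fun j _ => ?_)
    rw [Matrix.map_apply, Int.coe_castRingHom]
  rw [hx, Finset.smul_sum]
  refine Finset.sum_congr rfl (fun i _ => ?_)
  rw [smul_smul, hcoord i]
  have : ((bVB n i : V n) : ℝ[X]) = ((eM n i : Msub n) : ℝ[X]) := by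
    rw [bVB_apply]; rfl
  rw [this]

-- ====================== Part 8: transfer and main theorem ======================

lemma Msub_coe_zsmul (n : ℕ) (zz : ℤ) (y : Msub n) :
    ((zz • y : Msub n) : ℝ[X]) = (zz : ℝ) • (y : ℝ[X]) :=
  congrArg Subtype.val (iota_zsmul n zz y)

lemma iota_zero (n : ℕ) : ιMV n 0 = 0 := Subtype.ext rfl

lemma iota_sum_zsmul (n : ℕ) (y : Fin (n+1) → Msub n) (z : Fin (n+1) → ℤ) :
    ιMV n (∑ i : Fin (n+1), z i • y i) = ∑ i : Fin (n+1), (z i : ℝ) • ιMV n (y i) := by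
  apply Subtype.ext
  have hL : ((∑ i : Fin (n+1), z i • y i : Msub n) : ℝ[X])
      = ∑ i : Fin (n+1), z i • ((y i : Msub n) : ℝ[X]) := by
    show (Msub n).subtype (∑ i : Fin (n+1), z i • y i) = _
    rw [map_sum]
    exact Finset.sum_congr rfl (fun i _ => map_zsmul ((Msub n).subtype) _ _)
  have hR : ((∑ i : Fin (n+1), (z i : ℝ) • ιMV n (y i) : V n) : ℝ[X])
      = ∑ i : Fin (n+1), (z i : ℝ) • ((y i : Msub n) : ℝ[X]) := by
    show (V n).subtype (∑ i : Fin (n+1), (z i : ℝ) • ιMV n (y i)) = _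
    rw [map_sum]
    exact Finset.sum_congr rfl (fun i _ => map_smul ((V n).subtype) _ _)
  show ((∑ i : Fin (n+1), z i • y i : Msub n) : ℝ[X]) = _
  rw [hL, hR]
  exact Finset.sum_congr rfl (fun i _ => (Int.cast_smul_eq_zsmul ℝ _ _).symm)

noncomputable def Phi (n : ℕ) (φ : Msub n ≃ₗ[ℤ] Msub n) : Module.End ℝ (V n) :=
  (bVB n).constr ℝ (fun i => ιMV n (φ (eM n i)))

lemma Phi_basis (n : ℕ) (φ : Msub n ≃ₗ[ℤ] Msub n) (i : Fin (n+1)) :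
    Phi n φ (bVB n i) = ιMV n (φ (eM n i)) :=
  Module.Basis.constr_basis (bVB n) ℝ _ i

lemma Phi_agree (n : ℕ) (φ : Msub n ≃ₗ[ℤ] Msub n) (x : Msub n) :
    Phi n φ (ιMV n x) = ιMV n (φ x) := by
  obtain ⟨k, hk, z, hz⟩ := rat_coords n x
  have hkR : (k : ℝ) ≠ 0 := Int.cast_ne_zero.mpr hk
  -- V-level equation
  have hVeq : (k:ℝ) • ιMV n x = ∑ i : Fin (n+1), (z i : ℝ) • bVB n i := by
    apply Subtype.ext
    push_cast
    show (k:ℝ) • (x : ℝ[X]) = _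
    rw [hz]
    refine Finset.sum_congr rfl (fun i _ => ?_)
    rw [bVB_apply]
    rfl
  -- M-level equation
  have hMeq : k • x = ∑ i : Fin (n+1), z i • eM n i := by
    apply iota_inj n
    rw [iota_zsmul, iota_sum_zsmul]
    apply Subtype.ext
    show (k:ℝ) • (x : ℝ[X]) = ((∑ i : Fin (n+1), (z i : ℝ) • ιMV n (eM n i) : V n) : ℝ[X])
    rw [hz]
    have hR : ((∑ i : Fin (n+1), (z i : ℝ) • ιMV n (eM n i) : V n) : ℝ[X])
        = ∑ i : Fin (n+1), (z i : ℝ) • ((eM n i : Msub n) : ℝ[X]) := by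
      show (V n).subtype (∑ i : Fin (n+1), (z i : ℝ) • ιMV n (eM n i)) = _
      rw [map_sum]
      exact Finset.sum_congr rfl (fun i _ => map_smul ((V n).subtype) _ _)
    rw [hR]
  apply smul_right_injective (V n) hkR
  calc (k:ℝ) • Phi n φ (ιMV n x)
      = Phi n φ ((k:ℝ) • ιMV n x) := (map_smul _ _ _).symm
    _ = Phi n φ (∑ i : Fin (n+1), (z i : ℝ) • bVB n i) := by rw [hVeq]
    _ = ∑ i : Fin (n+1), (z i : ℝ) • ιMV n (φ (eM n i)) := by
        rw [map_sum]
        exact Finset.sum_congr rfl (fun i _ => by rw [map_smul, Phi_basis])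
    _ = ιMV n (φ (k • x)) := by
        rw [hMeq, map_sum]
        have hφs : ∀ i : Fin (n+1), φ (z i • eM n i) = z i • φ (eM n i) :=
          fun i => map_zsmul φ _ _
        rw [Finset.sum_congr rfl (fun i _ => hφs i), iota_sum_zsmul]
    _ = (k:ℝ) • ιMV n (φ x) := by rw [map_zsmul, iota_zsmul]

lemma Phi_mul (n : ℕ) (φ ψ : Msub n ≃ₗ[ℤ] Msub n) :
    Phi n φ * Phi n ψ = Phi n (φ * ψ) := by
  apply Module.Basis.ext (bVB n)
  intro i
  rw [Module.End.mul_apply, Phi_basis, Phi_basis, Phi_agree]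
  rfl

lemma Phi_one (n : ℕ) : Phi n 1 = 1 := by
  apply Module.Basis.ext (bVB n)
  intro i
  rw [Phi_basis, Module.End.one_apply]
  have h1 : (1 : Msub n ≃ₗ[ℤ] Msub n) (eM n i) = eM n i := rfl
  rw [h1, iota_eM]

lemma Phi_surj (n : ℕ) (φ : Msub n ≃ₗ[ℤ] Msub n) : Function.Surjective (Phi n φ) := by
  intro y
  refine ⟨Phi n φ⁻¹ y, ?_⟩
  have h1 : Phi n φ * Phi n φ⁻¹ = 1 := by
    rw [Phi_mul, mul_inv_cancel, Phi_one]
  have := congrArg (fun (F : Module.End ℝ (V n)) => F y) h1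
  simpa using this

section withchi
variable {n : ℕ} (χ : ↥(V n) →ₗ[ℝ] ↥(V n) →ₗ[ℝ] ℝ)

lemma Phi_iso (φ : Msub n ≃ₗ[ℤ] Msub n) (hφ : IsomM n χ φ) :
    ∀ f g : V n, χ (Phi n φ f) (Phi n φ g) = χ f g := by
  have key : LinearMap.compl₁₂ χ (Phi n φ) (Phi n φ) = χ := by
    apply LinearMap.ext_basis (bVB n) (bVB n)
    intro i j
    rw [LinearMap.compl₁₂_apply, Phi_basis, Phi_basis]
    have := hφ (eM n i) (eM n j)
    rw [this, iota_eM, iota_eM]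
  intro f g
  conv_rhs => rw [← key]
  rfl

lemma IsomM_inv (φ : Msub n ≃ₗ[ℤ] Msub n) (hφ : IsomM n χ φ) : IsomM n χ φ⁻¹ := by
  intro f g
  have := hφ (φ⁻¹ f) (φ⁻¹ g)
  have h1 : φ (φ⁻¹ f) = f := φ.apply_symm_apply f
  have h2 : φ (φ⁻¹ g) = g := φ.apply_symm_apply g
  rw [h1, h2] at this
  rw [this]

lemma IsomM_mul (φ ψ : Msub n ≃ₗ[ℤ] Msub n) (hφ : IsomM n χ φ) (hψ : IsomM n χ ψ) :
    IsomM n χ (φ * ψ) := by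
  intro f g
  have h1 : (φ * ψ) f = φ (ψ f) := rfl
  have h2 : (φ * ψ) g = φ (ψ g) := rfl
  rw [h1, h2, hφ (ψ f) (ψ g), hψ f g]

lemma oneM_smul_inj (n : ℕ) (a b : ℤ) (h : a • oneM n = b • oneM n) : a = b := by
  have hval := congrArg (fun y : Msub n => ((y : Msub n) : ℝ[X]).eval 0) h
  simp only [Msub_coe_zsmul] at hval
  have hone : ((oneM n : Msub n) : ℝ[X]) = 1 := rfl
  rw [hone] at hval
  simp at hval
  exact_mod_cast hval

variable (hχ : EulerCond n χ)
include hχ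

/-- main dichotomy on the lattice side -/
lemma exists_z (φ : Msub n ≃ₗ[ℤ] Msub n) (hφ : IsomM n χ φ) :
    ∃ z : ℤ, φ (oneM n) = z • oneM n ∧ (z = 1 → UnipM n φ) := by
  have hχ' : ∀ (i j : Fin (n + 1)), χ (bVB n i) (bVB n j) = ((n + (j:ℕ) - (i:ℕ)).choose n : ℝ) :=
    chi_bVB χ hχ
  set Φ := Phi n φ with hΦdef
  have hcommS : Φ * Sop n = Sop n * Φ := commutes χ hχ' Φ (Phi_iso χ φ hφ) (Phi_surj n φ)
  have hcommN : Φ * Nop n = Nop n * Φ := by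
    have hN : Nop n = Sop n - 1 := rfl
    ext v
    simp only [hN, Module.End.mul_apply, LinearMap.sub_apply, Module.End.one_apply, map_sub]
    rw [← Module.End.mul_apply Φ (Sop n), hcommS, Module.End.mul_apply]
  obtain ⟨c0, h1, h2⟩ := main_V n Φ hcommN
  have hφ1 : ιMV n (φ (oneM n)) = c0 • oneV n := by
    rw [← Phi_agree n φ (oneM n), iota_oneM, ← h1]
  -- c0 is an integer
  obtain ⟨zz, hzz⟩ := (mem_Msub.mp (φ (oneM n)).2).2 0
  have hval : ((φ (oneM n) : Msub n) : ℝ[X]) = c0 • (1 : ℝ[X]) :=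
    congrArg Subtype.val hφ1
  have hc0 : c0 = (zz : ℝ) := by
    have h5 := hzz
    rw [hval] at h5
    simpa using h5
  refine ⟨zz, ?_, ?_⟩
  · apply Subtype.ext
    rw [hval, Msub_coe_zsmul, hc0]
    have hone : ((oneM n : Msub n) : ℝ[X]) = 1 := rfl
    rw [hone]
  · intro hz1
    have hc1 : c0 = 1 := by rw [hc0, hz1]; simp
    have hU := h2 hc1
    -- transfer nilpotency
    have transfer : ∀ (k : ℕ) (x : Msub n),
        ιMV n (((φ.toLinearMap - LinearMap.id : Module.End ℤ (Msub n)) ^ k) x)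
          = ((Φ - 1) ^ k) (ιMV n x) := by
      intro k
      induction k with
      | zero => intro x; simp
      | succ k ih =>
        intro x
        rw [pow_succ, pow_succ, Module.End.mul_apply, Module.End.mul_apply]
        have hstep : ιMV n ((φ.toLinearMap - LinearMap.id : Module.End ℤ (Msub n)) x)
            = (Φ - 1) (ιMV n x) := by
          rw [LinearMap.sub_apply, LinearMap.sub_apply, Module.End.one_apply, LinearMap.id_apply]
          rw [iota_sub]
          congr 1
          exact (Phi_agree n φ x).symm
        rw [← hstep, ih]
    rw [UnipM]
    apply LinearMap.ext
    intro x
    rw [LinearMap.zero_apply]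
    apply iota_inj n
    rw [transfer (n+1) x, hU, iota_zero]
    rfl

lemma z_pm (φ : Msub n ≃ₗ[ℤ] Msub n) (hφ : IsomM n χ φ) (z : ℤ)
    (hz : φ (oneM n) = z • oneM n) : z = 1 ∨ z = -1 := by
  obtain ⟨z', hz', _⟩ := exists_z χ hχ φ⁻¹ (IsomM_inv χ φ hφ)
  have : oneM n = (z * z') • oneM n := by
    have h1 : φ⁻¹ (φ (oneM n)) = oneM n := φ.symm_apply_apply (oneM n)
    rw [hz, map_zsmul, hz', smul_smul] at h1
    exact h1.symm
  have h2 : (1 : ℤ) • oneM n = (z * z') • oneM n := by rw [one_smul]; exact this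
  have h3 := oneM_smul_inj n 1 (z * z') h2
  rw [← Int.isUnit_iff]
  exact IsUnit.of_mul_eq_one (a := z) z' h3.symm

end withchi

lemma neg_case (n : ℕ) (φ : Msub n ≃ₗ[ℤ] Msub n)
    (hneg : φ (oneM n) = (-1 : ℤ) • oneM n) : ¬ UnipM n φ := by
  intro hU
  have hstep : (φ.toLinearMap - LinearMap.id : Module.End ℤ (Msub n)) (oneM n)
      = (-2 : ℤ) • oneM n := by
    rw [LinearMap.sub_apply, LinearMap.id_apply]
    have h0 : φ.toLinearMap (oneM n) = φ (oneM n) := rfl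
    rw [h0, hneg]
    have e1 : (-1 : ℤ) • oneM n = -oneM n := neg_one_zsmul _
    have e2 : (-2 : ℤ) • oneM n = -(oneM n + oneM n) := by
      have : (-2 : ℤ) = -(2 : ℤ) := by norm_num
      rw [this, neg_smul, two_zsmul]
    rw [e1, e2]
    abel
  have key : ∀ k : ℕ, ((φ.toLinearMap - LinearMap.id : Module.End ℤ (Msub n)) ^ k) (oneM n)
      = ((-2 : ℤ)^k) • oneM n := by
    intro k
    induction k with
    | zero => simp
    | succ k ih =>
      rw [pow_succ', Module.End.mul_apply, ih, map_zsmul, hstep, smul_smul, ← pow_succ]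
  have h1 := key (n+1)
  rw [hU] at h1
  have h2 : (0 : ℝ[X]) = (((-2:ℤ)^(n+1) • oneM n : Msub n) : ℝ[X]) := by
    rw [← h1]; rfl
  rw [Msub_coe_zsmul] at h2
  have hone : ((oneM n : Msub n) : ℝ[X]) = 1 := rfl
  rw [hone] at h2
  have h4 : ((((-2:ℤ))^(n+1) : ℤ) : ℝ) ≠ 0 :=
    Int.cast_ne_zero.mpr (pow_ne_zero _ (by norm_num))
  have h3 : ((((-2:ℤ))^(n+1) : ℤ) : ℝ) • (1:ℝ[X]) ≠ 0 := by
    rw [smul_eq_C_mul, mul_one]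
    exact fun hC => h4 (by simpa using (Polynomial.C_eq_zero.mp hC))
  exact h3 h2.symm


section finale
variable {n : ℕ} (χ : ↥(V n) →ₗ[ℝ] ↥(V n) →ₗ[ℝ] ℝ) (hχ : EulerCond n χ)
include hχ

lemma fixed_of_unip (φ : Msub n ≃ₗ[ℤ] Msub n) (hiso : IsomM n χ φ) (hU : UnipM n φ) :
    φ (oneM n) = oneM n := by
  obtain ⟨z, hz, _⟩ := exists_z χ hχ φ hiso
  rcases z_pm χ hχ φ hiso z hz with h1 | h1
  · rw [hz, h1, one_smul]
  · exfalso
    apply neg_case n φ _ hU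
    rw [hz, h1]

lemma unip_of_fixed (φ : Msub n ≃ₗ[ℤ] Msub n) (hiso : IsomM n χ φ)
    (hfix : φ (oneM n) = oneM n) : UnipM n φ := by
  obtain ⟨z, hz, himp⟩ := exists_z χ hχ φ hiso
  have hzz : z = 1 := by
    apply oneM_smul_inj n z 1
    rw [one_smul, ← hz, hfix]
  exact himp hzz

lemma neg_of_nonunip (φ : Msub n ≃ₗ[ℤ] Msub n) (hiso : IsomM n χ φ) (hU : ¬ UnipM n φ) :
    φ (oneM n) = (-1 : ℤ) • oneM n := by
  obtain ⟨z, hz, himp⟩ := exists_z χ hχ φ hiso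
  rcases z_pm χ hχ φ hiso z hz with h1 | h1
  · exact absurd (himp h1) hU
  · rw [hz, h1]

end finale

/-- In the group of `ℤ`-linear isometries of the lattice `(M_n, χ_n)`, the unipotent
isometries form a subgroup of index 2: they contain the identity, are closed under
multiplication and inverses, there exists a non-unipotent isometry, and the product
of any two non-unipotent isometries is unipotent (so there are exactly two cosets). -/
theorem unipotent_isometries_index_two (n : ℕ)
    (χ : ↥(V n) →ₗ[ℝ] ↥(V n) →ₗ[ℝ] ℝ) (hχ : EulerCond n χ) :
    UnipM n (1 : Msub n ≃ₗ[ℤ] Msub n) ∧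
    (∀ φ ψ : Msub n ≃ₗ[ℤ] Msub n, IsomM n χ φ → IsomM n χ ψ →
      UnipM n φ → UnipM n ψ → UnipM n (φ * ψ)) ∧
    (∀ φ : Msub n ≃ₗ[ℤ] Msub n, IsomM n χ φ → UnipM n φ → UnipM n φ⁻¹) ∧
    (∃ ψ : Msub n ≃ₗ[ℤ] Msub n, IsomM n χ ψ ∧ ¬ UnipM n ψ) ∧
    (∀ φ ψ : Msub n ≃ₗ[ℤ] Msub n, IsomM n χ φ → IsomM n χ ψ →
      ¬ UnipM n φ → ¬ UnipM n ψ → UnipM n (φ * ψ)) := by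
  have isom_one : IsomM n χ (1 : Msub n ≃ₗ[ℤ] Msub n) := fun f g => rfl
  refine ⟨?_, ?_, ?_, ?_, ?_⟩
  · -- identity is unipotent
    rw [UnipM]
    have h : ((1 : Msub n ≃ₗ[ℤ] Msub n).toLinearMap - LinearMap.id : Module.End ℤ (Msub n)) = 0 := by
      apply LinearMap.ext
      intro x
      simp
    rw [h, zero_pow (Nat.succ_ne_zero n)]
  · -- product of unipotents
    intro φ ψ hφi hψi hφU hψU
    apply unip_of_fixed χ hχ (φ * ψ) (IsomM_mul χ φ ψ hφi hψi)
    have h1 : (φ * ψ) (oneM n) = φ (ψ (oneM n)) := rfl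
    rw [h1, fixed_of_unip χ hχ ψ hψi hψU, fixed_of_unip χ hχ φ hφi hφU]
  · -- inverses
    intro φ hφi hφU
    apply unip_of_fixed χ hχ φ⁻¹ (IsomM_inv χ φ hφi)
    have h1 := fixed_of_unip χ hχ φ hφi hφU
    have h2 : φ⁻¹ (φ (oneM n)) = oneM n := φ.symm_apply_apply (oneM n)
    calc φ⁻¹ (oneM n) = φ⁻¹ (φ (oneM n)) := by rw [h1]
      _ = oneM n := h2
  · -- existence of a non-unipotent isometry: -1
    refine ⟨LinearEquiv.neg ℤ, ?_, ?_⟩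
    · intro f g
      have h1 : ιMV n ((LinearEquiv.neg ℤ) f) = -(ιMV n f) := Subtype.ext rfl
      have h2 : ιMV n ((LinearEquiv.neg ℤ) g) = -(ιMV n g) := Subtype.ext rfl
      rw [h1, h2, map_neg χ, LinearMap.neg_apply, map_neg, neg_neg]
    · apply neg_case
      rw [LinearEquiv.neg_apply, neg_one_zsmul]
  · -- product of two non-unipotents
    intro φ ψ hφi hψi hφU hψU
    apply unip_of_fixed χ hχ (φ * ψ) (IsomM_mul χ φ ψ hφi hψi)
    have h1 : (φ * ψ) (oneM n) = φ (ψ (oneM n)) := rfl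
    rw [h1, neg_of_nonunip χ hχ ψ hψi hψU, map_zsmul, neg_of_nonunip χ hχ φ hφi hφU,
      smul_smul]
    norm_num
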